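/- Let X be a reflexive real Banach space and let J be a closed subspace of X which is an M-ideal: there exists a bounded linear projection Q : X* → X* whose range is the annihilator J^⊥ = {η ∈ X* : η(j) = 0 for all j ∈ J} and such that ‖η‖ = ‖Q η‖ + ‖η − Q η‖ for all η ∈ X*. Then the pair (X, J) has the quotient lifting property (QLP). -/

import Mathlib

/-!
Reflexivity lets `Q` be written as the adjoint of an operator `P` on `X`: `η (P x) = (Q η) x`.
Since `Q` is an idempotent with range `J^⊥` and `J` is closed, `P` is an idempotent with kernel `J`,
and `‖P‖ ≤ ‖Q‖ ≤ 1` because an L-projection is contractive. Hence `P` descends to a contractive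
right inverse `σ` of the quotient map `X → X/J`, and `T = σ ∘ S` lifts `S` with `‖T‖ = ‖S‖`.
-/

open NormedSpace

section Quotient

variable {𝕜 X Z : Type*} [RCLike 𝕜] [SeminormedAddCommGroup X] [NormedSpace 𝕜 X]
  [SeminormedAddCommGroup Z] [NormedSpace 𝕜 Z] {J : Submodule 𝕜 X}

theorem Submodule.norm_mkQL_le : ‖J.mkQL‖ ≤ 1 :=
  ContinuousLinearMap.opNorm_le_bound _ zero_le_one fun x => by
    simpa using Submodule.Quotient.norm_mk_le J x

theorem Submodule.norm_liftQL_le (f : X →L[𝕜] Z) (h : J ≤ f.ker) : ‖J.liftQL f h‖ ≤ ‖f‖ := by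
  refine ContinuousLinearMap.opNorm_le_bound _ (norm_nonneg f) fun z => ?_
  rcases (norm_nonneg f).eq_or_lt' with hf | hf
  · obtain ⟨x, rfl⟩ := J.mkQ_surjective z
    simpa [hf] using f.le_opNorm x
  · rw [← div_le_iff₀' hf]
    refine QuotientAddGroup.le_norm_iff.2 ?_
    rintro x rfl
    rw [div_le_iff₀' hf]
    exact f.le_opNorm x

theorem Submodule.mem_iff_forall_dual_eq_zero (hJ : IsClosed (J : Set X)) (x : X) :
    x ∈ J ↔ ∀ η : StrongDual 𝕜 X, (∀ j ∈ J, η j = 0) → η x = 0 := by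
  refine ⟨fun hx η hη => hη x hx, fun h => ?_⟩
  have : IsClosed (J : Set X) := hJ -- makes `X ⧸ J` a normed space
  by_contra hx
  have hmk : ‖J.mkQ x‖ ≠ 0 := norm_ne_zero_iff.2 ((Submodule.Quotient.mk_eq_zero J).not.2 hx)
  obtain ⟨g, -, hg⟩ := exists_dual_vector 𝕜 (J.mkQ x) hmk
  have := h (g ∘L J.mkQL) fun j hj => by simp [(Submodule.Quotient.mk_eq_zero J).2 hj]
  rw [ContinuousLinearMap.comp_apply, Submodule.coe_mkQL, hg] at this
  exact hmk (by exact_mod_cast this)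

end Quotient

section Preadjoint

variable {𝕜 X : Type*} [RCLike 𝕜] [NormedAddCommGroup X] [NormedSpace 𝕜 X]
  (hrefl : Function.Surjective (inclusionInDoubleDual 𝕜 X))

noncomputable def NormedSpace.preadjoint (Q : StrongDual 𝕜 X →L[𝕜] StrongDual 𝕜 X) :
    X →L[𝕜] X :=
  let e := LinearIsometryEquiv.ofSurjective (inclusionInDoubleDualLi 𝕜) hrefl
  (e.symm : StrongDual 𝕜 (StrongDual 𝕜 X) →L[𝕜] X) ∘L
    (ContinuousLinearMap.compL 𝕜 (StrongDual 𝕜 X) (StrongDual 𝕜 X) 𝕜).flip Q ∘L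
    (e : X →L[𝕜] StrongDual 𝕜 (StrongDual 𝕜 X))

variable {Q : StrongDual 𝕜 X →L[𝕜] StrongDual 𝕜 X}

theorem NormedSpace.apply_preadjoint (η : StrongDual 𝕜 X) (x : X) :
    η (preadjoint hrefl Q x) = Q η x := by
  let e := LinearIsometryEquiv.ofSurjective (inclusionInDoubleDualLi 𝕜) hrefl
  have : e (preadjoint hrefl Q x) = (e x) ∘L Q := e.apply_symm_apply _
  exact congr($this η)

theorem NormedSpace.norm_preadjoint_le : ‖preadjoint hrefl Q‖ ≤ ‖Q‖ := by
  refine ContinuousLinearMap.opNorm_le_bound _ (norm_nonneg Q) fun x => ?_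
  refine norm_le_dual_bound 𝕜 _ (by positivity) fun η => ?_
  rw [apply_preadjoint]
  calc ‖Q η x‖ ≤ ‖Q η‖ * ‖x‖ := (Q η).le_opNorm x
    _ ≤ ‖Q‖ * ‖η‖ * ‖x‖ := by gcongr; exact Q.le_opNorm η
    _ = ‖Q‖ * ‖x‖ * ‖η‖ := by ring

theorem IsIdempotentElem.preadjoint (hQ : IsIdempotentElem Q) :
    IsIdempotentElem (preadjoint hrefl Q) := by
  ext x
  refine (SeparatingDual.eq_iff_forall_dual_eq (R := 𝕜)).2 fun η => ?_
  simp only [mul_apply_eq_comp, apply_preadjoint]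
  exact congr($(hQ.eq) η x)

theorem NormedSpace.ker_preadjoint {J : Submodule 𝕜 X} (hJ : IsClosed (J : Set X))
    (hrange : Set.range Q = {η : StrongDual 𝕜 X | ∀ j ∈ J, η j = 0}) :
    (preadjoint hrefl Q : X →ₗ[𝕜] X).ker = J := by
  ext x
  rw [LinearMap.mem_ker, ContinuousLinearMap.coe_coe,
    SeparatingDual.eq_zero_iff_forall_dual_eq_zero (R := 𝕜), J.mem_iff_forall_dual_eq_zero hJ]
  simp only [apply_preadjoint]
  rw [← Set.forall_mem_range (f := Q) (p := fun η => η x = 0), hrange]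
  rfl

end Preadjoint

section Lifting

variable {𝕜 X Y : Type*} [RCLike 𝕜] [SeminormedAddCommGroup X] [NormedSpace 𝕜 X]
  [SeminormedAddCommGroup Y] [NormedSpace 𝕜 Y] {J : Submodule 𝕜 X}

theorem Submodule.exists_lift_norm_eq_of_rightInverse (σ : X ⧸ J →L[𝕜] X)
    (hσ : ∀ z, J.mkQ (σ z) = z) (hσ_le : ‖σ‖ ≤ 1) (S : Y →L[𝕜] X ⧸ J) :
    ∃ T : Y →L[𝕜] X, (∀ y, J.mkQ (T y) = S y) ∧ ‖T‖ = ‖S‖ := by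
  have hST : J.mkQL ∘L σ ∘L S = S := by ext y; exact hσ (S y)
  refine ⟨σ ∘L S, fun y => hσ (S y), le_antisymm ?_ ?_⟩
  · calc ‖σ ∘L S‖ ≤ ‖σ‖ * ‖S‖ := σ.opNorm_comp_le S
      _ ≤ ‖S‖ := mul_le_of_le_one_left (norm_nonneg S) hσ_le
  · calc ‖S‖ = ‖J.mkQL ∘L σ ∘L S‖ := by rw [hST]
      _ ≤ ‖J.mkQL‖ * ‖σ ∘L S‖ := J.mkQL.opNorm_comp_le _
      _ ≤ ‖σ ∘L S‖ := mul_le_of_le_one_left (norm_nonneg _) norm_mkQL_le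

theorem Submodule.exists_lift_norm_eq_of_isIdempotentElem (P : X →L[𝕜] X)
    (hP : IsIdempotentElem P) (hP_le : ‖P‖ ≤ 1) (hker : (P : X →ₗ[𝕜] X).ker = J)
    (S : Y →L[𝕜] X ⧸ J) : ∃ T : Y →L[𝕜] X, (∀ y, J.mkQ (T y) = S y) ∧ ‖T‖ = ‖S‖ := by
  refine exists_lift_norm_eq_of_rightInverse (J.liftQL P hker.ge) (fun z => ?_)
    ((norm_liftQL_le P _).trans hP_le) S
  obtain ⟨x, rfl⟩ := J.mkQ_surjective z
  have hPP : P (P x) = P x := congr($(hP.eq) x)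
  have : P x - x ∈ J := by
    rw [← hker, LinearMap.mem_ker, ContinuousLinearMap.coe_coe, map_sub, hPP, sub_self]
  simpa [Submodule.Quotient.eq] using this

end Lifting

theorem qlp_of_M_ideal_in_reflexive_general
    {X : Type*} [NormedAddCommGroup X] [NormedSpace ℝ X]
    (hrefl : Function.Surjective (inclusionInDoubleDual ℝ X))
    (J : Submodule ℝ X) (hJ : IsClosed (J : Set X))
    (Q : StrongDual ℝ X →L[ℝ] StrongDual ℝ X) (hproj : ∀ η, Q (Q η) = Q η)
    (hrange : Set.range Q = {η : StrongDual ℝ X | ∀ j ∈ J, η j = 0})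
    (hL : ∀ η : StrongDual ℝ X, ‖η‖ = ‖Q η‖ + ‖η - Q η‖) :
    ∀ (Y : Type*) [NormedAddCommGroup Y] [NormedSpace ℝ Y] [CompleteSpace Y]
      (S : Y →L[ℝ] X ⧸ J), ∃ T : Y →L[ℝ] X, (∀ y, J.mkQ (T y) = S y) ∧ ‖T‖ = ‖S‖ := by
  intro Y _ _ _ S
  have hQ_le : ‖Q‖ ≤ 1 := Q.opNorm_le_bound zero_le_one fun η => by
    linarith [hL η, norm_nonneg (η - Q η)]
  exact J.exists_lift_norm_eq_of_isIdempotentElem (preadjoint hrefl Q)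
    (IsIdempotentElem.preadjoint hrefl (ContinuousLinearMap.ext hproj))
    ((norm_preadjoint_le hrefl).trans hQ_le) (ker_preadjoint hrefl hJ hrange) S

/-- If `X` is a reflexive Banach space and `J` is a closed subspace of `X`
which is an M-ideal (its annihilator `J^⊥` is an L-summand of `X*`), then the pair `(X, J)`
has the quotient lifting property (QLP). -/
theorem qlp_of_M_ideal_in_reflexive
    {X : Type*} [NormedAddCommGroup X] [NormedSpace ℝ X] [CompleteSpace X]
    (hrefl : Function.Surjective (inclusionInDoubleDual ℝ X))
    (J : Submodule ℝ X) (hJ : IsClosed (J : Set X))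
    (Q : StrongDual ℝ X →L[ℝ] StrongDual ℝ X) (hproj : ∀ η, Q (Q η) = Q η)
    (hrange : Set.range Q = {η : StrongDual ℝ X | ∀ j ∈ J, η j = 0})
    (hL : ∀ η : StrongDual ℝ X, ‖η‖ = ‖Q η‖ + ‖η - Q η‖) :
    ∀ (Y : Type*) [NormedAddCommGroup Y] [NormedSpace ℝ Y] [CompleteSpace Y]
      (S : Y →L[ℝ] X ⧸ J), ∃ T : Y →L[ℝ] X, (∀ y, J.mkQ (T y) = S y) ∧ ‖T‖ = ‖S‖ :=
  qlp_of_M_ideal_in_reflexive_general hrefl J hJ Q hproj hrange hL
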